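/- If P is a finite weak order and Q is an arbitrary finite poset, then the maximum size of a semiantichain in P×Q equals ∑_{i=1}^{k} μ_i^P·|B_i| for some family B_1, B_2, …, B_k of pairwise disjoint antichains in Q. -/

import Mathlib

/-- A *unichain* in the product of two posets: a chain of the form `{p} × C`
or `C × {q}`. -/
def IsUnichain {α β : Type*} [PartialOrder α] [PartialOrder β] (U : Set (α × β)) : Prop :=
  (∃ (p : α) (C : Set β), IsChain (· ≤ ·) C ∧ U = ({p} : Set α) ×ˢ C) ∨
  (∃ (q : β) (C : Set α), IsChain (· ≤ ·) C ∧ U = C ×ˢ ({q} : Set β))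

/-- A *semiantichain*: no two distinct elements lie in a common unichain. -/
def IsSemiantichain {α β : Type*} [PartialOrder α] [PartialOrder β] (S : Set (α × β)) : Prop :=
  ∀ x ∈ S, ∀ y ∈ S, x ≠ y → ∀ U : Set (α × β), IsUnichain U → ¬(x ∈ U ∧ y ∈ U)

/-- The maximum size of a semiantichain in `α × β`. -/
noncomputable def maxSemiantichain (α β : Type*) [PartialOrder α] [PartialOrder β] : ℕ :=
  sSup {n | ∃ S : Set (α × β), IsSemiantichain S ∧ S.ncard = n}

/-- The minimum number of unichains needed to cover `α × β`. -/
noncomputable def minUnichainCover (α β : Type*) [PartialOrder α] [PartialOrder β] : ℕ :=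
  sInf {n | ∃ U : Fin n → Set (α × β), (∀ i, IsUnichain (U i)) ∧ (⋃ i, U i) = Set.univ}

/-- Height: maximum size of a chain. -/
noncomputable def heightP (α : Type*) [PartialOrder α] : ℕ :=
  sSup {n | ∃ C : Set α, IsChain (· ≤ ·) C ∧ C.ncard = n}

/-- Width: maximum size of an antichain. -/
noncomputable def widthP (α : Type*) [PartialOrder α] : ℕ :=
  sSup {n | ∃ A : Set α, IsAntichain (· ≤ ·) A ∧ A.ncard = n}

/-- `dk α k`: maximum size of a union of `k` antichains. -/
noncomputable def dk (α : Type*) [PartialOrder α] (k : ℕ) : ℕ :=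
  sSup {n | ∃ A : Fin k → Set α, (∀ i, IsAntichain (· ≤ ·) (A i)) ∧ (⋃ i, A i).ncard = n}

/-- `ck α k`: maximum size of a union of `k` chains. -/
noncomputable def ck (α : Type*) [PartialOrder α] (k : ℕ) : ℕ :=
  sSup {n | ∃ C : Fin k → Set α, (∀ i, IsChain (· ≤ ·) (C i)) ∧ (⋃ i, C i).ncard = n}

/-- `P` is d-decomposable: it has an antichain partition `A_1, …, A_{h(P)}`
with `|A_1 ∪ … ∪ A_k| = d_k(P)` for every `k ≤ h(P)`. -/
def DDecomposable (α : Type*) [PartialOrder α] : Prop :=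
  ∃ A : Fin (heightP α) → Set α,
    (∀ i, IsAntichain (· ≤ ·) (A i)) ∧
    (∀ i j, i ≠ j → Disjoint (A i) (A j)) ∧
    (⋃ i, A i) = Set.univ ∧
    ∀ k, k ≤ heightP α →
      (⋃ i : Fin (heightP α), ⋃ (_ : (i : ℕ) < k), A i).ncard = dk α k

/-- `P` is c-decomposable: it has a chain partition `C_1, …, C_{w(P)}`
with `|C_1 ∪ … ∪ C_k| = c_k(P)` for every `k ≤ w(P)`. -/
def CDecomposable (α : Type*) [PartialOrder α] : Prop :=
  ∃ C : Fin (widthP α) → Set α,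
    (∀ i, IsChain (· ≤ ·) (C i)) ∧
    (∀ i j, i ≠ j → Disjoint (C i) (C j)) ∧
    (⋃ i, C i) = Set.univ ∧
    ∀ k, k ≤ widthP α →
      (⋃ i : Fin (widthP α), ⋃ (_ : (i : ℕ) < k), C i).ncard = ck α k

/-- A weak order: there is a level function `f` with `a < b` iff
`f a < f b`. -/
def IsWeakOrder (α : Type*) [PartialOrder α] : Prop :=
  ∃ f : α → ℕ, ∀ a b : α, a < b ↔ f a < f b

/-!
List the levels `L₀, L₁, …` of the weak order `P` by non-increasing size; then `d_k(P)` is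
`|L₀| + ⋯ + |L_{k-1}|`, since an antichain of `P` lies inside one level. A set `S ⊆ P × Q` is a
semiantichain iff each row `{x | (a, x) ∈ S}` is an antichain of `Q` and each column
`{a | (a, x) ∈ S}` is an antichain of `P`, i.e. lies in one level. So rows over different levels
are disjoint, and replacing every row over `L_i` by a largest one `B_i` does not shrink `S`;
conversely `⋃ L_i × B_i` is a semiantichain for any pairwise disjoint antichains `B_i`.
-/

open Finset Function

theorem Antitone.sum_le_sum_range_card {M : Type*} [AddCommMonoid M] [PartialOrder M]
    [IsOrderedAddMonoid M] {μ : ℕ → M} (hμ : Antitone μ) (J : Finset ℕ) :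
    ∑ j ∈ J, μ j ≤ ∑ i ∈ range #J, μ i := by
  induction J using Finset.induction_on_max with
  | empty => simp
  | insert x s hlt ih =>
    have hx : x ∉ s := fun h => (hlt x h).false
    have hs : #s ≤ x := by
      simpa using card_le_card (fun y hy => mem_range.2 (hlt y hy) : s ⊆ range x)
    rw [sum_insert hx, card_insert_of_notMem hx, sum_range_succ, add_comm]
    exact add_le_add ih (hμ hs)

theorem Finset.sum_comp_eq_sum_range_card_mul {α : Type*} [Fintype α] {g : α → ℕ} {N : ℕ}
    (hN : ∀ a, g a < N) (w : ℕ → ℕ) : ∑ a, w (g a) = ∑ i ∈ range N, #{a | g a = i} * w i := by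
  rw [← sum_fiberwise_of_maps_to (t := range N) (fun a _ => mem_range.2 (hN a))]
  refine sum_congr rfl fun i _ => ?_
  rw [sum_congr rfl fun a ha => congrArg w (mem_filter.1 ha).2, sum_const, smul_eq_mul]

theorem Finset.exists_equiv_antitone {ι γ : Type*} [LinearOrder γ] (s : Finset ι) (w : s → γ) :
    ∃ E : Fin #s ≃ s, Antitone (w ∘ E) := by
  let e : Fin #s ≃ s := s.equivFin.symm
  refine ⟨(Fin.revPerm.trans (Tuple.sort (w ∘ e))).trans e, ?_⟩
  exact (Tuple.monotone_sort (w ∘ e)).comp_antitone Fin.rev_anti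

theorem exists_relabel_antitone_card_fiber {α ι : Type*} [Fintype α] [DecidableEq ι]
    (f : α → ι) : ∃ (n : ℕ) (g : α → ℕ), (∀ a, g a < n) ∧ (∀ a b, g a = g b ↔ f a = f b) ∧
      Antitone fun i => #{a | g a = i} := by
  obtain ⟨E, hE⟩ := (univ.image f).exists_equiv_antitone fun v => #{a | f a = v}
  let g a : ℕ := E.symm ⟨f a, mem_image_of_mem f (mem_univ a)⟩
  have hfiber : ∀ i,
      #{a | g a = i} = if h : i < #(univ.image f) then #{a | f a = E ⟨i, h⟩} else 0 := by
    intro i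
    split_ifs with h
    · congr 1
      ext a
      simp only [mem_filter, mem_univ, true_and, g]
      rw [← Fin.eq_mk_iff_val_eq (hk := h), Equiv.symm_apply_eq, Subtype.ext_iff]
    · rw [card_eq_zero, filter_eq_empty_iff]
      exact fun a _ => (Fin.is_lt _).trans_le (not_lt.1 h) |>.ne
  refine ⟨#(univ.image f), g, fun a => Fin.is_lt _, fun a b => ?_, fun i j hij => ?_⟩
  · simp [g, Fin.val_inj]
  · simp only [hfiber]
    split_ifs with hj hi
    · exact hE (Fin.mk_le_mk.2 hij)
    · omega
    · exact Nat.zero_le _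
    · exact le_rfl

theorem Set.ncard_eq_sum_ncard_fiber {α β : Type*} [Fintype α] [Finite β] (S : Set (α × β)) :
    S.ncard = ∑ a, {x | (a, x) ∈ S}.ncard := by
  classical
  have := Fintype.ofFinite β
  simp only [Set.ncard_eq_toFinset_card', ← Set.filter_mem_univ_eq_toFinset, card_filter,
    Fintype.sum_prod_type]
  rfl

section LevelFunction

variable {α ι : Type*} [PartialOrder α]

/-- The labels need not respect the order, so the levels may be reindexed by decreasing size. -/
def IsLevelFunction (g : α → ι) : Prop :=
  ∀ ⦃a b : α⦄, a ≠ b → (a ≤ b ∨ b ≤ a ↔ g a ≠ g b)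

theorem isLevelFunction_of_lt_iff [LinearOrder ι] {f : α → ι}
    (hf : ∀ a b, a < b ↔ f a < f b) : IsLevelFunction f := by
  intro a b hab
  constructor
  · rintro (h | h) heq
    · exact ((hf a b).1 (h.lt_of_ne hab)).ne heq
    · exact ((hf b a).1 (h.lt_of_ne hab.symm)).ne' heq
  · intro h
    rcases h.lt_or_gt with h | h
    · exact Or.inl ((hf a b).2 h).le
    · exact Or.inr ((hf b a).2 h).le

namespace IsLevelFunction

variable {g : α → ι} (hg : IsLevelFunction g)
include hg

theorem congr {κ : Type*} {g' : α → κ} (h : ∀ a b, g' a = g' b ↔ g a = g b) :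
    IsLevelFunction g' := fun a b hab => by rw [hg hab, ne_eq, ne_eq, h]

theorem isAntichain_preimage_singleton (i : ι) : IsAntichain (· ≤ ·) (g ⁻¹' {i}) :=
  fun _ ha _ hb hab hle => (hg hab).1 (Or.inl hle) (ha.trans hb.symm)

theorem eq_of_isAntichain {A : Set α} (hA : IsAntichain (· ≤ ·) A) {a b : α} (ha : a ∈ A)
    (hb : b ∈ A) : g a = g b := by
  by_contra hne
  have hab : a ≠ b := fun h => hne (h ▸ rfl)
  rcases (hg hab).2 hne with h | h
  · exact hA ha hb hab h
  · exact hA hb ha hab.symm h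

theorem exists_subset_preimage_of_isAntichain [Nonempty ι] {A : Set α}
    (hA : IsAntichain (· ≤ ·) A) : ∃ i, A ⊆ g ⁻¹' {i} := by
  rcases A.eq_empty_or_nonempty with rfl | ⟨a, ha⟩
  · exact ⟨Classical.arbitrary ι, Set.empty_subset _⟩
  · exact ⟨g a, fun b hb => hg.eq_of_isAntichain hA hb ha⟩

end IsLevelFunction

theorem dk_eq_sum_range [Fintype α] {g : α → ℕ} (hg : IsLevelFunction g)
    (hμ : Antitone fun i => #{a | g a = i}) (k : ℕ) :
    dk α k = ∑ i ∈ range k, #{a | g a = i} := by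
  have hbdd : BddAbove {n | ∃ A : Fin k → Set α,
      (∀ i, IsAntichain (· ≤ ·) (A i)) ∧ (⋃ i, A i).ncard = n} :=
    ⟨Nat.card α, by rintro _ ⟨A, -, rfl⟩; exact Set.ncard_le_card _⟩
  refine le_antisymm (csSup_le ⟨_, fun _ => ∅, fun _ => Set.pairwise_empty _, rfl⟩ ?_)
    (le_csSup hbdd ⟨fun j => g ⁻¹' {(j : ℕ)}, fun j => hg.isAntichain_preimage_singleton _, ?_⟩)
  · rintro _ ⟨A, hA, rfl⟩
    choose c hc using fun j => hg.exists_subset_preimage_of_isAntichain (hA j)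
    calc (⋃ j, A j).ncard ≤ #{a | g a ∈ univ.image c} := by
          rw [← Set.ncard_coe_finset]
          refine Set.ncard_le_ncard (Set.iUnion_subset fun j a ha => ?_)
          simpa using ⟨j, (hc j ha).symm⟩
      _ = ∑ i ∈ univ.image c, #{a | g a = i} := (sum_card_fiberwise_eq_card_filter _ _ _).symm
      _ ≤ ∑ i ∈ range #(univ.image c), #{a | g a = i} := hμ.sum_le_sum_range_card _
      _ ≤ ∑ i ∈ range k, #{a | g a = i} :=
          sum_le_sum_of_subset (range_subset_range.2 (card_image_le.trans (by simp)))
  · rw [sum_card_fiberwise_eq_card_filter, ← Set.ncard_coe_finset]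
    congr 1
    ext a
    simp [Fin.exists_iff]

end LevelFunction

section Semiantichain

variable {α β : Type*} [PartialOrder α] [PartialOrder β]

theorem isSemiantichain_iff {S : Set (α × β)} :
    IsSemiantichain S ↔ (∀ a, IsAntichain (· ≤ ·) {x | (a, x) ∈ S}) ∧
      ∀ x, IsAntichain (· ≤ ·) {a | (a, x) ∈ S} := by
  constructor
  · intro hS
    refine ⟨fun a x hx y hy hxy hle => ?_, fun x a ha b hb hab hle => ?_⟩
    · exact hS _ hx _ hy (by simpa using hxy) _ (Or.inl ⟨a, _, IsChain.pair hle, rfl⟩) (by simp)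
    · exact hS _ ha _ hb (by simpa using hab) _ (Or.inr ⟨x, _, IsChain.pair hle, rfl⟩) (by simp)
  · rintro ⟨hfib, hcofib⟩ ⟨a, x⟩ hax ⟨b, y⟩ hby hne _ (⟨p, C, hC, rfl⟩ | ⟨q, C, hC, rfl⟩)
      ⟨hxU, hyU⟩
    · obtain ⟨rfl, hx⟩ := hxU
      obtain ⟨rfl, hy⟩ := hyU
      exact hne (Prod.ext rfl
        (inter_subsingleton_of_isChain_of_isAntichain hC (hfib _) ⟨hx, hax⟩ ⟨hy, hby⟩))
    · obtain ⟨hx, rfl⟩ := hxU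
      obtain ⟨hy, rfl⟩ := hyU
      exact hne (Prod.ext
        (inter_subsingleton_of_isChain_of_isAntichain hC (hcofib _) ⟨hx, hax⟩ ⟨hy, hby⟩) rfl)

theorem bddAbove_ncard_isSemiantichain [Finite α] [Finite β] :
    BddAbove {n | ∃ S : Set (α × β), IsSemiantichain S ∧ S.ncard = n} :=
  ⟨Nat.card (α × β), by rintro _ ⟨S, -, rfl⟩; exact Set.ncard_le_card S⟩

theorem IsSemiantichain.ncard_le_maxSemiantichain [Finite α] [Finite β] {S : Set (α × β)}
    (hS : IsSemiantichain S) : S.ncard ≤ maxSemiantichain α β :=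
  le_csSup bddAbove_ncard_isSemiantichain ⟨S, hS, rfl⟩

theorem exists_isSemiantichain_ncard_eq_maxSemiantichain [Finite α] [Finite β] :
    ∃ S : Set (α × β), IsSemiantichain S ∧ S.ncard = maxSemiantichain α β :=
  Nat.sSup_mem (s := {n | ∃ S : Set (α × β), IsSemiantichain S ∧ S.ncard = n})
    ⟨0, ∅, fun _ h => h.elim, Set.ncard_empty _⟩ bddAbove_ncard_isSemiantichain

section LevelFunction

variable {ι : Type*} {g : α → ι} (hg : IsLevelFunction g)
include hg

theorem IsLevelFunction.isSemiantichain_setOf_mem {B : ι → Set β}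
    (hB : ∀ i, IsAntichain (· ≤ ·) (B i)) (hBd : Pairwise (Disjoint on B)) :
    IsSemiantichain {z : α × β | z.2 ∈ B (g z.1)} := by
  refine isSemiantichain_iff.2 ⟨fun a => hB (g a), fun x a ha b hb hab hle => ?_⟩
  have hlevel : g a = g b := by
    by_contra h
    exact Set.disjoint_left.1 (hBd h) ha hb
  exact (hg hab).1 (Or.inl hle) hlevel

theorem IsLevelFunction.exists_antichains_ncard_le [Fintype α] [Finite β] {S : Set (α × β)}
    (hS : IsSemiantichain S) :
    ∃ B : ι → Set β, (∀ i, IsAntichain (· ≤ ·) (B i)) ∧ Pairwise (Disjoint on B) ∧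
      S.ncard ≤ ∑ a, (B (g a)).ncard := by
  obtain ⟨hfib, hcofib⟩ := isSemiantichain_iff.1 hS
  have hshadow : Pairwise (Disjoint on fun i => {x | ∃ a, g a = i ∧ (a, x) ∈ S}) := by
    rintro i j hij
    refine Set.disjoint_left.2 ?_
    rintro x ⟨a, rfl, hax⟩ ⟨b, rfl, hbx⟩
    exact hij (hg.eq_of_isAntichain (hcofib x) hax hbx)
  have hmax : ∀ i, ∃ B : Set β, IsAntichain (· ≤ ·) B ∧ B ⊆ {x | ∃ a, g a = i ∧ (a, x) ∈ S} ∧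
      ∀ a, g a = i → {x | (a, x) ∈ S}.ncard ≤ B.ncard := by
    intro i
    rcases (g ⁻¹' {i}).eq_empty_or_nonempty with h | h
    · exact ⟨∅, Set.pairwise_empty _, Set.empty_subset _,
        fun a ha => (Set.eq_empty_iff_forall_notMem.1 h a ha).elim⟩
    · obtain ⟨a, ha, hmax⟩ := Set.exists_max_image _ (fun a => {x | (a, x) ∈ S}.ncard)
        (Set.toFinite _) h
      exact ⟨_, hfib a, fun x hx => ⟨a, ha, hx⟩, hmax⟩
  choose B hB hBsub hBmax using hmax
  refine ⟨B, hB, fun i j hij => (hshadow hij).mono (hBsub i) (hBsub j), ?_⟩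
  rw [Set.ncard_eq_sum_ncard_fiber]
  exact sum_le_sum fun a _ => hBmax _ a rfl

end LevelFunction

theorem IsLevelFunction.maxSemiantichain_eq_sum_range [Fintype α] [Finite β] {g : α → ℕ}
    (hg : IsLevelFunction g) {N : ℕ} (hN : ∀ a, g a < N) :
    ∃ B : ℕ → Set β, (∀ i, IsAntichain (· ≤ ·) (B i)) ∧ Pairwise (Disjoint on B) ∧
      maxSemiantichain α β = ∑ i ∈ range N, #{a | g a = i} * (B i).ncard := by
  obtain ⟨S, hS, hSmax⟩ := exists_isSemiantichain_ncard_eq_maxSemiantichain (α := α) (β := β)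
  obtain ⟨B, hB, hBd, hle⟩ := hg.exists_antichains_ncard_le hS
  refine ⟨B, hB, hBd, ?_⟩
  rw [← sum_comp_eq_sum_range_card_mul hN]
  refine le_antisymm (hSmax.symm.le.trans hle) ?_
  calc ∑ a, (B (g a)).ncard = {z : α × β | z.2 ∈ B (g z.1)}.ncard := by
        simp only [Set.ncard_eq_sum_ncard_fiber, Set.mem_ofPred_eq, Set.ofPred_mem_eq]
    _ ≤ maxSemiantichain α β := (hg.isSemiantichain_setOf_mem hB hBd).ncard_le_maxSemiantichain

end Semiantichain

/-- If `P` is a finite weak order and `Q` an arbitrary finite poset, then the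
maximum size of a semiantichain in `P × Q` equals
`∑_{i=1}^k μ_i^P ⬝ |B_i|` for some family `B_1, …, B_k` of pairwise disjoint
antichains of `Q`, where `μ_i = d_i(P) - d_{i-1}(P)`. -/
theorem maxSemiantichain_weak_order_decomposable
    (α β : Type) [Fintype α] [PartialOrder α] [Fintype β] [PartialOrder β]
    (hw : IsWeakOrder α) :
    ∃ (k : ℕ) (B : Fin k → Set β),
      (∀ i, IsAntichain (· ≤ ·) (B i)) ∧
      (∀ i j, i ≠ j → Disjoint (B i) (B j)) ∧
      maxSemiantichain α β =
        ∑ i : Fin k, (dk α ((i : ℕ) + 1) - dk α (i : ℕ)) * (B i).ncard := by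
  obtain ⟨f, hf⟩ := hw
  obtain ⟨N, g, hgN, hgf, hμ⟩ := exists_relabel_antitone_card_fiber f
  have hg : IsLevelFunction g := (isLevelFunction_of_lt_iff hf).congr hgf
  obtain ⟨B, hB, hBd, hmax⟩ := hg.maxSemiantichain_eq_sum_range (β := β) hgN
  refine ⟨N, fun i => B i, fun i => hB i, fun i j hij => hBd (Fin.val_injective.ne hij), ?_⟩
  rw [hmax, sum_range]
  refine sum_congr rfl fun i _ => ?_
  rw [dk_eq_sum_range hg hμ, dk_eq_sum_range hg hμ, sum_range_succ, Nat.add_sub_cancel_left]
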